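/- arXiv:2505.15129 — 3 statements merged into one kernel-verified Lean document; each statement's English description precedes it below -/
import Mathlib

section
/- Let φ : ℝ≥0 × X → X be a continuous flow on a metric space X with a globally attracting fixed point at 0, and let Ω ⊆ X be open, containing 0, and positive-time invariant. Then Ω is exhausted by positive-time-invariant open sets with compact closure in Ω: for every compact set K ⊆ Ω there exists an open positive-time-invariant set Ω₀ with K ⊆ Ω₀ and closure(Ω₀) compact and contained in Ω. -/
/-!
Choose a compact neighbourhood `W ⊆ Ω` of `x₀` containing `ball x₀ ε`, and `δ` so that orbits
starting in `ball x₀ δ` stay in `ball x₀ ε`. Every point enters `ball x₀ δ`, and by compactness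
the points of `K` do so before a common time `T`; hence the forward orbit of `K` lies in the
compact set `Q = φ([0, T] × K) ∪ W ⊆ Ω`. Squeeze `Q ⊆ interior L ⊆ L ⊆ Ω` with `L` compact and take
`Ω₀ = {z | φ t z ∈ interior L for all t}`, which is invariant and contains `K`. It is open because
near a point `z` the finite orbit segment up to the time `z` enters `ball x₀ δ` stays in
`interior L` (tube lemma), and after that time the orbit is trapped in `W ⊆ interior L`.
-/

open Filter Topology Metric NNReal Set

section Semiflow

variable {X : Type*} {φ : ℝ≥0 → X → X}

lemma apply_eq_apply_tsub (hφadd : ∀ s t : ℝ≥0, φ (s + t) = φ s ∘ φ t) {s t : ℝ≥0}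
    (hst : s ≤ t) (z : X) : φ t z = φ (t - s) (φ s z) := by
  rw [← Function.comp_apply (f := φ (t - s)), ← hφadd, tsub_add_cancel_of_le hst]

lemma image_setOf_forall_apply_mem_subset (hφadd : ∀ s t : ℝ≥0, φ (s + t) = φ s ∘ φ t)
    (V : Set X) (t : ℝ≥0) :
    φ t '' {z | ∀ s, φ s z ∈ V} ⊆ {z | ∀ s, φ s z ∈ V} := by
  rintro _ ⟨z, hz, rfl⟩ s
  simpa [hφadd] using hz (s + t)

variable [TopologicalSpace X]

lemma IsCompact.exists_forall_exists_le_apply_mem (hφ : ∀ t, Continuous (φ t)) {K U : Set X}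
    (hK : IsCompact K) (hU : IsOpen U) (hreach : ∀ z ∈ K, ∃ t, φ t z ∈ U) :
    ∃ T, ∀ z ∈ K, ∃ t ≤ T, φ t z ∈ U := by
  choose! τ hτ using hreach
  obtain ⟨s, hsK, hKs⟩ := hK.elim_nhds_subcover (fun z => φ (τ z) ⁻¹' U)
    fun z hz => (hU.preimage (hφ _)).mem_nhds (hτ z hz)
  refine ⟨s.sup τ, fun z hz => ?_⟩
  obtain ⟨y, hys, hzy⟩ := mem_iUnion₂.1 (hKs hz)
  exact ⟨τ y, Finset.le_sup hys, hzy⟩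

lemma IsCompact.forall_apply_mem_image_union (hcont : Continuous fun p : ℝ≥0 × X => φ p.1 p.2)
    (hφadd : ∀ s t : ℝ≥0, φ (s + t) = φ s ∘ φ t) {K U W : Set X} (hK : IsCompact K)
    (hU : IsOpen U) (hUW : ∀ t, ∀ z ∈ U, φ t z ∈ W) (hreach : ∀ z ∈ K, ∃ t, φ t z ∈ U) :
    ∃ T, ∀ z ∈ K, ∀ t,
      φ t z ∈ (fun p : ℝ≥0 × X => φ p.1 p.2) '' (Icc 0 T ×ˢ K) ∪ W := by
  obtain ⟨T, hT⟩ :=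
    hK.exists_forall_exists_le_apply_mem (fun t => hcont.comp (.prodMk_right t)) hU hreach
  refine ⟨T, fun z hz t => ?_⟩
  rcases le_total t T with htT | hTt
  · exact Or.inl ⟨(t, z), ⟨⟨zero_le, htT⟩, hz⟩, rfl⟩
  · obtain ⟨s, hsT, hsU⟩ := hT z hz
    rw [apply_eq_apply_tsub hφadd (hsT.trans hTt)]
    exact Or.inr (hUW _ _ hsU)

lemma isOpen_setOf_forall_apply_mem (hcont : Continuous fun p : ℝ≥0 × X => φ p.1 p.2)
    (hφadd : ∀ s t : ℝ≥0, φ (s + t) = φ s ∘ φ t) {U V : Set X} (hU : IsOpen U) (hV : IsOpen V)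
    (hUV : ∀ t, ∀ z ∈ U, φ t z ∈ V) (hreach : ∀ z, ∃ t, φ t z ∈ U) :
    IsOpen {z | ∀ t, φ t z ∈ V} := by
  rw [isOpen_iff_eventually]
  intro z hz
  obtain ⟨T, hTU⟩ := hreach z
  have hsegment : ∀ᶠ w in 𝓝 z, ∀ t ∈ Icc 0 T, φ t w ∈ V :=
    isCompact_Icc.eventually_forall_of_forall_eventually fun t _ =>
      ((hcont.comp continuous_swap).continuousAt (x := (z, t))).preimage_mem_nhds
        (hV.mem_nhds (hz t))
  have hentry : ∀ᶠ w in 𝓝 z, φ T w ∈ U :=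
    (hcont.comp (.prodMk_right T)).continuousAt.preimage_mem_nhds (hU.mem_nhds hTU)
  filter_upwards [hsegment, hentry] with w hw hwT t
  rcases le_total t T with htT | hTt
  · exact hw t ⟨zero_le, htT⟩
  · rw [apply_eq_apply_tsub hφadd hTt]
    exact hUV _ _ hwT

end Semiflow

/-- A positive-time invariant open set `Ω ∋ 0` for a continuous semiflow with a globally
attracting fixed point at `x₀` on a locally compact metric space is exhausted by
positive-time invariant open sets with compact closure in `Ω`. -/
theorem exhaustion_by_invariant_relatively_compact_opens
    {X : Type*} [MetricSpace X] [LocallyCompactSpace X]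
    (φ : ℝ≥0 → X → X) (x₀ : X)
    (hcont : Continuous fun p : ℝ≥0 × X => φ p.1 p.2)
    (hφ0 : φ 0 = id)
    (hφadd : ∀ s t : ℝ≥0, φ (s + t) = φ s ∘ φ t)
    (hattract : ∀ z : X, Tendsto (fun t : ℝ≥0 => φ t z) atTop (𝓝 x₀))
    (hstab : ∀ ε > (0:ℝ), ∃ δ > (0:ℝ), ∀ t : ℝ≥0, ∀ z ∈ ball x₀ δ,
      φ t z ∈ ball x₀ ε)
    (Ω : Set X) (hΩopen : IsOpen Ω) (hΩ0 : x₀ ∈ Ω)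
    (hΩinv : ∀ t : ℝ≥0, φ t '' Ω ⊆ Ω) :
    ∀ K : Set X, IsCompact K → K ⊆ Ω →
      ∃ Ω₀ : Set X, IsOpen Ω₀ ∧ K ⊆ Ω₀ ∧ (∀ t : ℝ≥0, φ t '' Ω₀ ⊆ Ω₀) ∧
        IsCompact (closure Ω₀) ∧ closure Ω₀ ⊆ Ω := by
  intro K hK hKΩ
  obtain ⟨W, hWc, hx₀W, hWΩ⟩ := exists_compact_subset hΩopen hΩ0
  obtain ⟨ε, hε, hεW⟩ := Metric.mem_nhds_iff.1 (mem_interior_iff_mem_nhds.1 hx₀W)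
  obtain ⟨δ, hδ, hδε⟩ := hstab ε hε
  have hUW : ∀ t, ∀ z ∈ ball x₀ δ, φ t z ∈ W := fun t z hz => hεW (hδε t z hz)
  have hreach : ∀ z, ∃ t, φ t z ∈ ball x₀ δ := fun z =>
    ((hattract z).eventually (ball_mem_nhds x₀ hδ)).exists
  obtain ⟨T, hKT⟩ := hK.forall_apply_mem_image_union hcont hφadd isOpen_ball hUW fun z _ => hreach z
  set Q := (fun p : ℝ≥0 × X => φ p.1 p.2) '' (Icc 0 T ×ˢ K) ∪ W
  have hQΩ : Q ⊆ Ω := by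
    rintro _ (⟨⟨t, z⟩, ⟨-, hz⟩, rfl⟩ | hw)
    exacts [hΩinv t ⟨z, hKΩ hz, rfl⟩, hWΩ hw]
  obtain ⟨L, hLc, hQL, hLΩ⟩ :=
    exists_compact_between (((isCompact_Icc.prod hK).image hcont).union hWc) hΩopen hQΩ
  have hclosure : closure {z | ∀ t, φ t z ∈ interior L} ⊆ L :=
    closure_minimal (fun z hz => interior_subset (by simpa [hφ0] using hz 0)) hLc.isClosed
  exact ⟨_, isOpen_setOf_forall_apply_mem hcont hφadd isOpen_ball isOpen_interior
      (fun t z hz => hQL (Or.inr (hUW t z hz))) hreach,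
    fun z hz t => hQL (hKT z hz t), image_setOf_forall_apply_mem_subset hφadd _,
    hLc.of_isClosed_subset isClosed_closure hclosure, hclosure.trans hLΩ⟩
end

section
/- Let V be a complete holomorphic vector field on ℂⁿ with flow φ_t and constant divergence c (with respect to ω = dz_1 ∧ ⋯ ∧ dz_n). If V has a globally attracting fixed point at 0, then Re(c) < 0. In particular, a complete holomorphic vector field with identically zero divergence has no globally attracting fixed point. -/
/-!
The matrix `M t = Dφ_t(0)` solves the variational equation `M' = DV(φ_t 0) M`, so by Jacobi's
formula `(det M)' = tr(DV) det M = c det M` and `det M t = exp (c t)`. Global attraction makes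
`M t → 0`, hence `exp (c t) → 0`, which forces `Re c < 0`.

Holomorphy in `z` replaces any joint regularity of `(t, z) ↦ φ_t z`: by the Cauchy integral
formula, `Dφ_t(0) v` is an integral of `φ_t` over the small circle `{w • v : ‖w‖ = r}`, on which
stability bounds `φ_t` (and hence `V ∘ φ_t`) uniformly for `t ≥ 0`, so time derivatives and
limits pass under the integral by dominated convergence.
-/

open Filter Topology Metric MeasureTheory Complex Set

section CircleIntegral

variable {E : Type*} [NormedAddCommGroup E] [NormedSpace ℂ E] {c : ℂ} {R C : ℝ}

theorem norm_deriv_circleMap_smul_le (hR : 0 ≤ R) (θ : ℝ) {x : E} (hx : ‖x‖ ≤ C) :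
    ‖deriv (circleMap c R) θ • x‖ ≤ R * C := by
  rw [norm_smul, deriv_circleMap, norm_mul, norm_circleMap_zero, norm_I, mul_one,
    abs_of_nonneg hR]
  exact mul_le_mul_of_nonneg_left hx hR

theorem circleIntegral.tendsto_integral_of_dominated {ι : Type*} {l : Filter ι}
    [l.IsCountablyGenerated] {F : ι → ℂ → E} {f : ℂ → E} (hR : 0 ≤ R)
    (hF : ∀ᶠ i in l, CircleIntegrable (F i) c R)
    (hbound : ∀ᶠ i in l, ∀ w ∈ sphere c R, ‖F i w‖ ≤ C)
    (hlim : ∀ w ∈ sphere c R, Tendsto (F · w) l (𝓝 (f w))) :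
    Tendsto (fun i => ∮ w in C(c, R), F i w) l (𝓝 (∮ w in C(c, R), f w)) :=
  intervalIntegral.tendsto_integral_filter_of_dominated_convergence (fun _ => R * C)
    (hF.mono fun _ hi => hi.out.aestronglyMeasurable_restrict_uIoc)
    (hbound.mono fun _ hi => ae_of_all _ fun θ _ =>
      norm_deriv_circleMap_smul_le hR θ (hi _ (circleMap_mem_sphere c hR θ)))
    intervalIntegrable_const
    (ae_of_all _ fun θ _ => (hlim _ (circleMap_mem_sphere c hR θ)).const_smul _)

theorem circleIntegral.hasDerivAt_integral_of_dominated {F F' : ℝ → ℂ → E} {t₀ : ℝ}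
    (hR : 0 ≤ R) (hF : ∀ᶠ t in 𝓝 t₀, CircleIntegrable (F t) c R)
    (hF' : CircleIntegrable (F' t₀) c R)
    (hbound : ∀ᶠ t in 𝓝 t₀, ∀ w ∈ sphere c R, ‖F' t w‖ ≤ C)
    (hderiv : ∀ᶠ t in 𝓝 t₀, ∀ w ∈ sphere c R, HasDerivAt (F · w) (F' t w) t) :
    HasDerivAt (fun t => ∮ w in C(c, R), F t w) (∮ w in C(c, R), F' t₀ w) t₀ :=
  (intervalIntegral.hasDerivAt_integral_of_dominated_loc_of_deriv_le (hbound.and hderiv)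
    (hF.mono fun _ ht => ht.out.aestronglyMeasurable_restrict_uIoc) hF.self_of_nhds.out
    (F' := fun t θ => deriv (circleMap c R) θ • F' t (circleMap c R θ))
    hF'.out.aestronglyMeasurable_restrict_uIoc
    (ae_of_all _ fun θ _ _ ht =>
      norm_deriv_circleMap_smul_le hR θ (ht.1 _ (circleMap_mem_sphere c hR θ)))
    intervalIntegrable_const
    (ae_of_all _ fun θ _ _ ht => (ht.2 _ (circleMap_mem_sphere c hR θ)).const_smul _)).2

end CircleIntegral

namespace Complex

variable {E : Type*} [NormedAddCommGroup E] [NormedSpace ℂ E] {z : ℂ} {r C : ℝ}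

theorem circleIntegrable_inv_sub_sq_smul {f : ℂ → E} (hr : 0 < r)
    (hf : ContinuousOn f (sphere z r)) :
    CircleIntegrable (fun w => ((w - z) ^ 2)⁻¹ • f w) z r := by
  refine ContinuousOn.circleIntegrable hr.le (ContinuousOn.smul ?_ hf)
  refine (by fun_prop : Continuous fun w : ℂ => (w - z) ^ 2).continuousOn.inv₀ fun w hw => ?_
  rw [mem_sphere_iff_norm] at hw
  exact pow_ne_zero 2 (norm_ne_zero_iff.1 (hw ▸ hr.ne'))

theorem norm_inv_sub_sq_smul_le {w : ℂ} (hw : w ∈ sphere z r) {x : E} (hx : ‖x‖ ≤ C) :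
    ‖((w - z) ^ 2)⁻¹ • x‖ ≤ (r ^ 2)⁻¹ * C := by
  rw [mem_sphere_iff_norm] at hw
  rw [norm_smul, norm_inv, norm_pow, hw]
  exact mul_le_mul_of_nonneg_left hx (by positivity)

theorem tendsto_cderiv_of_dominated {ι : Type*} {l : Filter ι} [l.IsCountablyGenerated]
    {f : ι → ℂ → E} {g : ℂ → E} (hr : 0 < r) (hf : ∀ᶠ i in l, ContinuousOn (f i) (sphere z r))
    (hbound : ∀ᶠ i in l, ∀ w ∈ sphere z r, ‖f i w‖ ≤ C)
    (hlim : ∀ w ∈ sphere z r, Tendsto (f · w) l (𝓝 (g w))) :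
    Tendsto (fun i => cderiv r (f i) z) l (𝓝 (cderiv r g z)) :=
  (circleIntegral.tendsto_integral_of_dominated hr.le
    (hf.mono fun _ hi => circleIntegrable_inv_sub_sq_smul hr hi)
    (hbound.mono fun _ hi w hw => norm_inv_sub_sq_smul_le hw (hi w hw))
    fun w hw => (hlim w hw).const_smul _).const_smul _

theorem hasDerivAt_cderiv_of_dominated {f f' : ℝ → ℂ → E} {t₀ : ℝ} (hr : 0 < r)
    (hf : ∀ᶠ t in 𝓝 t₀, ContinuousOn (f t) (sphere z r))
    (hf' : ContinuousOn (f' t₀) (sphere z r))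
    (hbound : ∀ᶠ t in 𝓝 t₀, ∀ w ∈ sphere z r, ‖f' t w‖ ≤ C)
    (hderiv : ∀ᶠ t in 𝓝 t₀, ∀ w ∈ sphere z r, HasDerivAt (f · w) (f' t w) t) :
    HasDerivAt (fun t => cderiv r (f t) z) (cderiv r (f' t₀) z) t₀ :=
  (circleIntegral.hasDerivAt_integral_of_dominated hr.le
    (hf.mono fun _ ht => circleIntegrable_inv_sub_sq_smul hr ht)
    (circleIntegrable_inv_sub_sq_smul hr hf')
    (hbound.mono fun _ ht w hw => norm_inv_sub_sq_smul_le hw (ht w hw))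
    (hderiv.mono fun _ ht w hw => (ht w hw).const_smul _)).const_smul _

end Complex

section HolomorphicFamily

variable {E F : Type*} [NormedAddCommGroup E] [NormedSpace ℂ E] [NormedAddCommGroup F]
  [NormedSpace ℂ F] [CompleteSpace F] {x : E} {ρ C : ℝ}

theorem add_smul_mem_ball (hρ : 0 < ρ) {v : E} {w : ℂ} (hw : ‖w‖ ≤ ρ / (‖v‖ + 1)) :
    x + w • v ∈ ball x ρ := by
  rw [mem_ball, dist_self_add_left, norm_smul]
  calc ‖w‖ * ‖v‖ ≤ ρ / (‖v‖ + 1) * ‖v‖ := by gcongr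
    _ < ρ := by
      rw [div_mul_eq_mul_div, div_lt_iff₀ (by positivity)]
      nlinarith

theorem fderiv_apply_eq_cderiv {ψ : E → F} (hρ : 0 < ρ) (hψ : DifferentiableOn ℂ ψ (ball x ρ))
    (v : E) : fderiv ℂ ψ x v = cderiv (ρ / (‖v‖ + 1)) (fun w : ℂ => ψ (x + w • v)) 0 := by
  have hline : HasDerivAt (fun w : ℂ => x + w • v) v 0 := by
    simpa using ((hasDerivAt_id (0 : ℂ)).smul_const v).const_add x
  have hU : IsOpen ((fun w : ℂ => x + w • v) ⁻¹' ball x ρ) :=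
    isOpen_ball.preimage (by fun_prop)
  rw [cderiv_eq_deriv (f := fun w : ℂ => ψ (x + w • v)) hU
    (hψ.comp (by fun_prop) fun _ hw => hw) (by positivity)
    fun w hw => add_smul_mem_ball hρ (mem_closedBall_zero_iff.1 hw)]
  have hψx : HasFDerivAt ψ (fderiv ℂ ψ x) (x + (0 : ℂ) • v) := by
    rw [zero_smul, add_zero]
    exact (hψ.differentiableAt (isOpen_ball.mem_nhds (mem_ball_self hρ))).hasFDerivAt
  exact (hψx.comp_hasDerivAt 0 hline).deriv.symm

theorem tendsto_fderiv_apply_of_tendsto {ι : Type*} {l : Filter ι} [l.IsCountablyGenerated]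
    {ψ : ι → E → F} {g : E → F} (hρ : 0 < ρ)
    (hψ : ∀ᶠ i in l, DifferentiableOn ℂ (ψ i) (ball x ρ)) (hg : DifferentiableOn ℂ g (ball x ρ))
    (hbound : ∀ᶠ i in l, ∀ y ∈ ball x ρ, ‖ψ i y‖ ≤ C)
    (hlim : ∀ y ∈ ball x ρ, Tendsto (ψ · y) l (𝓝 (g y))) (v : E) :
    Tendsto (fun i => fderiv ℂ (ψ i) x v) l (𝓝 (fderiv ℂ g x v)) := by
  have hline : MapsTo (fun w : ℂ => x + w • v) (sphere 0 (ρ / (‖v‖ + 1))) (ball x ρ) :=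
    fun w hw => add_smul_mem_ball hρ (mem_sphere_zero_iff_norm.1 hw).le
  rw [fderiv_apply_eq_cderiv hρ hg]
  refine (tendsto_cderiv_of_dominated (by positivity)
    (hψ.mono fun _ hi => hi.continuousOn.comp (by fun_prop) hline)
    (hbound.mono fun _ hi w hw => hi _ (hline hw)) fun w hw => hlim _ (hline hw)).congr' ?_
  exact hψ.mono fun _ hi => (fderiv_apply_eq_cderiv hρ hi v).symm

theorem hasDerivAt_fderiv_apply_of_hasDerivAt {ψ ψ' : ℝ → E → F} {t₀ : ℝ} (hρ : 0 < ρ)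
    (hψ : ∀ᶠ t in 𝓝 t₀, DifferentiableOn ℂ (ψ t) (ball x ρ))
    (hψ' : DifferentiableOn ℂ (ψ' t₀) (ball x ρ))
    (hbound : ∀ᶠ t in 𝓝 t₀, ∀ y ∈ ball x ρ, ‖ψ' t y‖ ≤ C)
    (hderiv : ∀ᶠ t in 𝓝 t₀, ∀ y ∈ ball x ρ, HasDerivAt (ψ · y) (ψ' t y) t) (v : E) :
    HasDerivAt (fun t => fderiv ℂ (ψ t) x v) (fderiv ℂ (ψ' t₀) x v) t₀ := by
  have hline : MapsTo (fun w : ℂ => x + w • v) (sphere 0 (ρ / (‖v‖ + 1))) (ball x ρ) :=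
    fun w hw => add_smul_mem_ball hρ (mem_sphere_zero_iff_norm.1 hw).le
  rw [fderiv_apply_eq_cderiv hρ hψ']
  refine (hasDerivAt_cderiv_of_dominated (by positivity)
    (hψ.mono fun _ ht => ht.continuousOn.comp (by fun_prop) hline)
    (hψ'.continuousOn.comp (by fun_prop) hline)
    (hbound.mono fun _ ht w hw => ht _ (hline hw))
    (hderiv.mono fun _ ht w hw => ht _ (hline hw))).congr_of_eventuallyEq ?_
  exact hψ.mono fun _ ht => fderiv_apply_eq_cderiv hρ ht v

end HolomorphicFamily

namespace Matrix

variable {𝕜 𝔸 ι : Type*} [NontriviallyNormedField 𝕜] [NormedCommRing 𝔸] [NormedAlgebra 𝕜 𝔸]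
  [Fintype ι] [DecidableEq ι] {M : 𝕜 → Matrix ι ι 𝔸} {t₀ : 𝕜}

theorem hasDerivAt_det {N : Matrix ι ι 𝔸} (h : ∀ i j, HasDerivAt (fun t => M t i j) (N i j) t₀) :
    HasDerivAt (fun t => (M t).det) (trace (adjugate (M t₀) * N)) t₀ := by
  have hexpand : HasDerivAt (fun t => (M t).det)
      (∑ σ : Equiv.Perm ι, ((Equiv.Perm.sign σ : ℤ) : 𝔸) *
        ∑ i, (∏ j ∈ Finset.univ.erase i, M t₀ (σ j) j) • N (σ i) i) t₀ := by
    simp only [det_apply']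
    exact HasDerivAt.fun_sum fun σ _ =>
      (HasDerivAt.fun_finsetProd fun i _ => h (σ i) i).const_mul _
  convert hexpand using 1
  calc trace (adjugate (M t₀) * N)
      = ∑ i, cramer (M t₀) (fun k => N k i) i := by
        simp [trace, mul_apply, cramer_eq_adjugate_mulVec, mulVec, dotProduct]
    _ = ∑ i, ∑ σ : Equiv.Perm ι, ((Equiv.Perm.sign σ : ℤ) : 𝔸) *
          (N (σ i) i * ∏ k ∈ Finset.univ.erase i, M t₀ (σ k) k) := by
        refine Finset.sum_congr rfl fun i _ => ?_
        rw [cramer_apply, det_apply']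
        refine Finset.sum_congr rfl fun σ _ => ?_
        rw [← Finset.mul_prod_erase Finset.univ _ (Finset.mem_univ i)]
        congr 2
        · simp
        · exact Finset.prod_congr rfl fun k hk => by
            simp [Finset.ne_of_mem_erase hk]
    _ = ∑ σ : Equiv.Perm ι, ((Equiv.Perm.sign σ : ℤ) : 𝔸) *
          ∑ i, (∏ j ∈ Finset.univ.erase i, M t₀ (σ j) j) • N (σ i) i := by
        rw [Finset.sum_comm]
        simp only [Finset.mul_sum, smul_eq_mul, mul_comm (N _ _)]

theorem hasDerivAt_det_of_hasDerivAt_mul {A : Matrix ι ι 𝔸}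
    (h : ∀ i j, HasDerivAt (fun t => M t i j) ((A * M t₀) i j) t₀) :
    HasDerivAt (fun t => (M t).det) (A.trace * (M t₀).det) t₀ := by
  convert hasDerivAt_det h using 1
  rw [trace_mul_comm, Matrix.mul_assoc, mul_adjugate, Matrix.mul_smul, Matrix.mul_one,
    trace_smul, smul_eq_mul, mul_comm]

theorem tendsto_det_toMatrix' {α R ι : Type*} [CommRing R] [TopologicalSpace R]
    [IsTopologicalRing R] [Fintype ι] [DecidableEq ι] {l : Filter α}
    {L : α → (ι → R) →ₗ[R] ι → R} {L₀ : (ι → R) →ₗ[R] ι → R}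
    (h : ∀ j, Tendsto (fun a => L a (Pi.single j 1)) l (𝓝 (L₀ (Pi.single j 1)))) :
    Tendsto (fun a => (LinearMap.toMatrix' (L a)).det) l (𝓝 (LinearMap.toMatrix' L₀).det) :=
  (continuous_id.matrix_det.tendsto _).comp <| tendsto_pi_nhds.2 fun i =>
    tendsto_pi_nhds.2 fun j => by simpa using tendsto_pi_nhds.1 (h j) i

end Matrix

section JacobianDeterminant

variable {ι : Type*} [Fintype ι] [DecidableEq ι] {x : ι → ℂ} {ρ C : ℝ}

theorem tendsto_det_fderiv_of_tendsto {α : Type*} {l : Filter α} [l.IsCountablyGenerated]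
    {ψ : α → (ι → ℂ) → ι → ℂ} {g : (ι → ℂ) → ι → ℂ} (hρ : 0 < ρ)
    (hψ : ∀ᶠ a in l, DifferentiableOn ℂ (ψ a) (ball x ρ)) (hg : DifferentiableOn ℂ g (ball x ρ))
    (hbound : ∀ᶠ a in l, ∀ y ∈ ball x ρ, ‖ψ a y‖ ≤ C)
    (hlim : ∀ y ∈ ball x ρ, Tendsto (ψ · y) l (𝓝 (g y))) :
    Tendsto (fun a => (fderiv ℂ (ψ a) x).det) l (𝓝 (fderiv ℂ g x).det) := by
  simp only [ContinuousLinearMap.det, ← LinearMap.det_toMatrix']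
  exact Matrix.tendsto_det_toMatrix' fun j => by
    simpa using tendsto_fderiv_apply_of_tendsto hρ hψ hg hbound hlim (Pi.single j 1)

theorem hasDerivAt_det_fderiv_of_hasDerivAt_comp {V : (ι → ℂ) → ι → ℂ}
    {φ : ℝ → (ι → ℂ) → ι → ℂ} {t₀ : ℝ} (hρ : 0 < ρ) (hV : Differentiable ℂ V)
    (hφ : ∀ᶠ t in 𝓝 t₀, DifferentiableOn ℂ (φ t) (ball x ρ))
    (hbound : ∀ᶠ t in 𝓝 t₀, ∀ y ∈ ball x ρ, ‖V (φ t y)‖ ≤ C)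
    (hflow : ∀ᶠ t in 𝓝 t₀, ∀ y ∈ ball x ρ, HasDerivAt (φ · y) (V (φ t y)) t) :
    HasDerivAt (fun t => (fderiv ℂ (φ t) x).det)
      (LinearMap.trace ℂ _ (fderiv ℂ V (φ t₀ x)).toLinearMap * (fderiv ℂ (φ t₀) x).det) t₀ := by
  have hφx : DifferentiableAt ℂ (φ t₀) x :=
    hφ.self_of_nhds.differentiableAt (isOpen_ball.mem_nhds (mem_ball_self hρ))
  simp only [ContinuousLinearMap.det, ← LinearMap.det_toMatrix',
    LinearMap.trace_eq_matrix_trace ℂ (Pi.basisFun ℂ ι), LinearMap.toMatrix_eq_toMatrix']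
  refine Matrix.hasDerivAt_det_of_hasDerivAt_mul fun i j => ?_
  have h := hasDerivAt_fderiv_apply_of_hasDerivAt (ψ' := fun t => V ∘ φ t) hρ hφ
    (hV.comp_differentiableOn hφ.self_of_nhds) hbound hflow (Pi.single j 1)
  rw [fderiv_comp x (hV _) hφx] at h
  simpa [LinearMap.toMatrix'_apply, ← LinearMap.toMatrix'_comp] using hasDerivAt_pi.1 h i

end JacobianDeterminant

theorem eq_exp_smul_of_hasDerivAt {E : Type*} [NormedAddCommGroup E] [NormedSpace ℂ E]
    {f : ℝ → E} {c : ℂ} (hcont : ContinuousWithinAt f (Ici 0) 0)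
    (hderiv : ∀ t > 0, HasDerivAt f (c • f t) t) {t : ℝ} (ht : 0 ≤ t) :
    f t = exp (c * t) • f 0 := by
  set g : ℝ → E := fun s => exp (-(c * s)) • f s
  have hg' : ∀ s > 0, HasDerivAt g 0 s := fun s hs => by
    have hexp : HasDerivAt (fun s : ℝ => exp (-(c * s))) (-(exp (-(c * s)) * c)) s := by
      simpa using (((hasDerivAt_id s).ofReal_comp.const_mul c).neg).cexp
    convert hexp.fun_smul (hderiv s hs) using 1
    rw [smul_smul, neg_smul, add_neg_cancel]
  have hgcont : ContinuousOn g (Ici 0) := fun s hs => by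
    rcases (mem_Ici.1 hs).eq_or_lt with rfl | hs
    · exact ((by fun_prop : Continuous fun s : ℝ => exp (-(c * s))).continuousWithinAt).smul
        hcont
    · exact (hg' s hs).continuousAt.continuousWithinAt
  have hg0 : HasDerivWithinAt g 0 (Ici 0) 0 :=
    hasDerivWithinAt_Ici_of_tendsto_deriv
      (fun s hs => (hg' s hs).differentiableAt.differentiableWithinAt)
      ((hgcont 0 self_mem_Ici).mono Ioi_subset_Ici_self) self_mem_nhdsWithin
      (tendsto_const_nhds.congr' (eventually_nhdsWithin_of_forall fun s hs =>
        (hg' s hs).deriv.symm))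
  have hg_right : ∀ s ∈ Ico 0 t, HasDerivWithinAt g 0 (Ici s) s := fun s hs => by
    rcases hs.1.eq_or_lt with rfl | hs
    · exact hg0
    · exact (hg' s hs).hasDerivWithinAt
  have hconst := constant_of_has_deriv_right_zero (hgcont.mono Icc_subset_Ici_self) hg_right t
    ⟨ht, le_rfl⟩
  simp only [g, ofReal_zero, mul_zero, neg_zero, exp_zero, one_smul] at hconst
  rw [← hconst, smul_smul, ← exp_add, add_neg_cancel, exp_zero, one_smul]

theorem Complex.re_neg_of_tendsto_exp_mul {c : ℂ}
    (h : Tendsto (fun t : ℝ => exp (c * t)) atTop (𝓝 0)) : c.re < 0 := by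
  by_contra! hc
  have hge : ∀ t ≥ (0 : ℝ), 1 ≤ ‖exp (c * t)‖ := fun t ht => by
    rw [norm_exp, re_mul_ofReal]
    exact Real.one_le_exp (mul_nonneg hc ht)
  have := ge_of_tendsto h.norm ((eventually_ge_atTop 0).mono hge)
  norm_num at this

theorem re_divergence_neg_of_globally_attracting_general {n : ℕ} (hn : 0 < n)
    (V : (Fin n → ℂ) → (Fin n → ℂ)) (hV : Differentiable ℂ V)
    (φ : ℝ → (Fin n → ℂ) → (Fin n → ℂ))
    (hφ0 : φ 0 = id)
    (hflow : ∀ (z : Fin n → ℂ) (t : ℝ), HasDerivAt (fun s => φ s z) (V (φ t z)) t)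
    (hhol : ∀ t : ℝ, Differentiable ℂ (φ t))
    (c : ℂ)
    (hdiv : ∀ z : Fin n → ℂ, (∑ j : Fin n, fderiv ℂ V z (Pi.single j 1) j) = c)
    (hattract : ∀ z : Fin n → ℂ, Tendsto (fun t : ℝ => φ t z) atTop (𝓝 0))
    (hstab : ∀ ε > (0:ℝ), ∃ δ > (0:ℝ), ∀ t : ℝ, 0 ≤ t →
      ∀ z ∈ ball (0 : Fin n → ℂ) δ, φ t z ∈ ball (0 : Fin n → ℂ) ε) :
    c.re < 0 := by
  have : Nonempty (Fin n) := Fin.pos_iff_nonempty.mp hn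
  obtain ⟨δ, hδ, hδball⟩ := hstab 1 one_pos
  have hφ_le : ∀ t ≥ 0, ∀ y ∈ ball (0 : Fin n → ℂ) δ, ‖φ t y‖ ≤ 1 := fun t ht y hy =>
    (mem_ball_zero_iff.1 (hδball t ht y hy)).le
  obtain ⟨K, hK⟩ : ∃ K, ∀ y ∈ closedBall (0 : Fin n → ℂ) 1, ‖V y‖ ≤ K :=
    (isCompact_closedBall _ _).exists_bound_of_continuousOn hV.continuous.continuousOn
  have hφ_hol : ∀ t, DifferentiableOn ℂ (φ t) (ball 0 δ) := fun t => (hhol t).differentiableOn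
  have htrace : ∀ z, LinearMap.trace ℂ _ (fderiv ℂ V z).toLinearMap = c := fun z => by
    simpa [LinearMap.trace_eq_matrix_trace ℂ (Pi.basisFun ℂ (Fin n)), Matrix.trace] using hdiv z
  have hdet' : ∀ t > 0, HasDerivAt (fun s => (fderiv ℂ (φ s) 0).det)
      (c • (fderiv ℂ (φ t) 0).det) t := fun t ht => by
    simpa [htrace] using hasDerivAt_det_fderiv_of_hasDerivAt_comp hδ hV
      (Eventually.of_forall hφ_hol)
      ((eventually_gt_nhds ht).mono fun s hs y hy =>
        hK _ (mem_closedBall_zero_iff.2 (hφ_le s hs.le y hy)))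
      (Eventually.of_forall fun s y _ => hflow y s)
  have hdet_cont : ContinuousWithinAt (fun t => (fderiv ℂ (φ t) 0).det) (Ici 0) 0 :=
    tendsto_det_fderiv_of_tendsto hδ (Eventually.of_forall hφ_hol) (hφ_hol 0)
      (eventually_mem_nhdsWithin.mono fun s hs => hφ_le s hs)
      fun y _ => (hflow y 0).continuousAt.tendsto.mono_left nhdsWithin_le_nhds
  have hdet_exp : ∀ t ≥ 0, (fderiv ℂ (φ t) 0).det = exp (c * t) := fun t ht => by
    simpa [hφ0, ContinuousLinearMap.det] using eq_exp_smul_of_hasDerivAt hdet_cont hdet' ht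
  have hdet_lim : Tendsto (fun t => (fderiv ℂ (φ t) 0).det) atTop (𝓝 0) := by
    simpa [ContinuousLinearMap.det] using tendsto_det_fderiv_of_tendsto (g := fun _ => 0) hδ
      (Eventually.of_forall hφ_hol) (differentiableOn_const 0) ((eventually_ge_atTop 0).mono fun s hs => hφ_le s hs)
      fun y _ => hattract y
  exact re_neg_of_tendsto_exp_mul (hdet_lim.congr' ((eventually_ge_atTop 0).mono hdet_exp))

/-- A complete holomorphic vector field on `ℂⁿ` (`n ≥ 1`) with constant divergence `c`
and a globally attracting fixed point at `0` must have `Re c < 0`. In particular, a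
divergence-free complete holomorphic vector field has no globally attracting fixed
point. -/
theorem re_divergence_neg_of_globally_attracting {n : ℕ} (hn : 0 < n)
    (V : (Fin n → ℂ) → (Fin n → ℂ)) (hV : Differentiable ℂ V)
    (φ : ℝ → (Fin n → ℂ) → (Fin n → ℂ))
    (hφ0 : φ 0 = id)
    (hflow : ∀ (z : Fin n → ℂ) (t : ℝ), HasDerivAt (fun s => φ s z) (V (φ t z)) t)
    (hhol : ∀ t : ℝ, Differentiable ℂ (φ t))
    (c : ℂ)
    (hdiv : ∀ z : Fin n → ℂ, (∑ j : Fin n, fderiv ℂ V z (Pi.single j 1) j) = c)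
    (hV0 : V 0 = 0)
    (hattract : ∀ z : Fin n → ℂ, Tendsto (fun t : ℝ => φ t z) atTop (𝓝 0))
    (hstab : ∀ ε > (0:ℝ), ∃ δ > (0:ℝ), ∀ t : ℝ, 0 ≤ t →
      ∀ z ∈ ball (0 : Fin n → ℂ) δ, φ t z ∈ ball (0 : Fin n → ℂ) ε) :
    c.re < 0 :=
  re_divergence_neg_of_globally_attracting_general hn V hV φ hφ0 hflow hhol c hdiv hattract hstab
end

section
/- Let F : Ω → ℂⁿ be a holomorphic map on an open neighborhood Ω of 0 in ℂⁿ with F(0) = 0 and DF(0) = Id. Then for every sufficiently small ε > 0 the ball B(0,ε) is contained in Ω and the image F(B(0,ε)) is an open convex subset of ℂⁿ, and F restricted to B(0,ε) is injective. -/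
/-!
Cauchy estimates on complex lines make `DF` Lipschitz near `0`, say with constant `K`, so on
`B(0,ε)` the map `F` is within `Kε` of the identity in `C¹`: it is injective with open image.
For convexity, let `F z = (1-t) F x + t F y`. The second-order Taylor bound puts `z` within
`2K t(1-t)‖x-y‖²` of `m = (1-t) x + t y`, while the uniform convexity of the Euclidean norm puts
`m` at depth at least `t(1-t)‖x-y‖² / (2κ)` inside the ball of radius `κ = max ‖x‖ ‖y‖`. Hence
`‖z‖ ≤ κ` once `4Kε ≤ 1`, so the segment `[F x, F y]` meets `F(closedBall 0 ρ)` (`κ < ρ < ε`)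
only inside the open set `F(ball 0 ρ)`, and connectedness of the segment does the rest.
-/

open Filter Topology Metric Set
open scoped NNReal

section Cauchy

variable {E F : Type*} [NormedAddCommGroup E] [NormedSpace ℂ E] [NormedAddCommGroup F]
  [NormedSpace ℂ F] {f : E → F} {c : E}

theorem norm_fderiv_le_of_forall_mem_closedBall_norm_le {r C : ℝ} (hr : 0 < r)
    (hf : ∀ x ∈ closedBall c r, DifferentiableAt ℂ f x) (hC : ∀ x ∈ closedBall c r, ‖f x‖ ≤ C) :
    ‖fderiv ℂ f c‖ ≤ C / r := by
  have hC0 : 0 ≤ C := (norm_nonneg _).trans (hC c (mem_closedBall_self hr.le))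
  refine ContinuousLinearMap.opNorm_le_of_unit_norm (by positivity) fun w hw => ?_
  have hline : ∀ z ∈ closedBall (0 : ℂ) r, c + z • w ∈ closedBall c r := fun z hz => by
    simpa [norm_smul, hw] using hz
  have hderiv : ∀ z ∈ closedBall (0 : ℂ) r,
      HasDerivAt (fun z : ℂ => f (c + z • w)) (fderiv ℂ f (c + z • w) w) z := fun z hz =>
    (hf _ (hline z hz)).hasFDerivAt.comp_hasDerivAt z
      (((hasDerivAt_id z).smul_const w).const_add c |>.congr_deriv (one_smul ℂ w))
  have hdiff : DiffContOnCl ℂ (fun z : ℂ => f (c + z • w)) (ball 0 r) :=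
    DifferentiableOn.diffContOnCl <| by
      rw [closure_ball 0 hr.ne']
      exact fun z hz => (hderiv z hz).differentiableAt.differentiableWithinAt
  have := Complex.norm_deriv_le_of_forall_mem_sphere_norm_le hr hdiff
    fun z hz => hC _ (hline z (sphere_subset_closedBall hz))
  simpa [(hderiv 0 (mem_closedBall_self hr.le)).deriv] using this

theorem lipschitzOnWith_fderiv_of_forall_mem_closedBall_norm_le {R C : ℝ} (hR : 0 < R)
    (hf : ∀ x ∈ closedBall c (3 * R), DifferentiableAt ℂ f x)
    (hC : ∀ x ∈ closedBall c (3 * R), ‖f x‖ ≤ C) :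
    LipschitzOnWith (Real.toNNReal (C / R ^ 2)) (fderiv ℂ f) (closedBall c R) := by
  have h23 : closedBall c (2 * R) ⊆ closedBall c (3 * R) :=
    closedBall_subset_closedBall (by linarith)
  have hball : ∀ a ∈ closedBall c (2 * R), closedBall a R ⊆ closedBall c (3 * R) :=
    fun a ha => closedBall_subset_closedBall' (by rw [mem_closedBall] at ha; linarith)
  have h2R : ∀ a ∈ closedBall c R, closedBall a R ⊆ closedBall c (2 * R) :=
    fun a ha => closedBall_subset_closedBall' (by rw [mem_closedBall] at ha; linarith)
  have hD : ∀ a ∈ closedBall c (2 * R), ‖fderiv ℂ f a‖ ≤ C / R := fun a ha =>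
    norm_fderiv_le_of_forall_mem_closedBall_norm_le hR (fun x hx => hf x (hball a ha hx))
      (fun x hx => hC x (hball a ha hx))
  have hfLip : ∀ u ∈ closedBall c (2 * R), ∀ v ∈ closedBall c (2 * R),
      ‖f u - f v‖ ≤ C / R * ‖u - v‖ := fun u hu v hv =>
    (convex_closedBall c (2 * R)).norm_image_sub_le_of_norm_fderiv_le
      (fun x hx => hf x (h23 hx)) hD hv hu
  refine LipschitzOnWith.of_dist_le' fun a ha b hb => ?_
  rw [dist_eq_norm, dist_eq_norm]
  have hshift : ∀ u ∈ closedBall a R, u + (b - a) ∈ closedBall b R := fun u hu => by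
    rwa [mem_closedBall, dist_eq_norm, add_sub_assoc, sub_sub_cancel_left, ← sub_eq_add_neg,
      ← dist_eq_norm]
  have hg : ∀ u ∈ closedBall a R, HasFDerivAt (fun u => f u - f (u + (b - a)))
      (fderiv ℂ f u - fderiv ℂ f (u + (b - a))) u := fun u hu =>
    (hf u (h23 (h2R a ha hu))).hasFDerivAt.sub <| (hasFDerivAt_comp_add_right (b - a)).2
      (hf _ (h23 (h2R b hb (hshift u hu)))).hasFDerivAt
  have hgC : ∀ u ∈ closedBall a R, ‖f u - f (u + (b - a))‖ ≤ C / R * ‖a - b‖ := fun u hu => by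
    simpa using hfLip u (h2R a ha hu) _ (h2R b hb (hshift u hu))
  have := norm_fderiv_le_of_forall_mem_closedBall_norm_le hR
    (fun u hu => (hg u hu).differentiableAt) hgC
  rw [(hg a (mem_closedBall_self hR.le)).fderiv, add_sub_cancel] at this
  calc ‖fderiv ℂ f a - fderiv ℂ f b‖ ≤ C / R * ‖a - b‖ / R := this
    _ = C / R ^ 2 * ‖a - b‖ := by ring

theorem exists_lipschitzOnWith_fderiv_of_eventually_differentiableAt
    (hf : ∀ᶠ x in 𝓝 c, DifferentiableAt ℂ f x) :
    ∃ K, ∃ t ∈ 𝓝 c, LipschitzOnWith K (fderiv ℂ f) t := by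
  have hbounded : ∀ᶠ x in 𝓝 c, DifferentiableAt ℂ f x ∧ ‖f x‖ ≤ ‖f c‖ + 1 :=
    hf.and (hf.self_of_nhds.continuousAt.norm.eventually (eventually_le_nhds (lt_add_one _)))
  obtain ⟨r, hr, hsub⟩ := nhds_basis_closedBall.mem_iff.1 hbounded
  have hR : 0 < r / 3 := by positivity
  refine ⟨_, closedBall c (r / 3), closedBall_mem_nhds c hR,
    lipschitzOnWith_fderiv_of_forall_mem_closedBall_norm_le hR (fun x hx => (hsub ?_).1)
      (fun x hx => (hsub ?_).2)⟩ <;> rwa [mul_div_cancel₀ _ three_ne_zero] at hx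

end Cauchy

section Taylor

variable {E F : Type*} [NormedAddCommGroup E] [NormedSpace ℝ E] [NormedAddCommGroup F]
  [NormedSpace ℝ F] {f : E → F} {f' : E → E →L[ℝ] F} {s : Set E} {K : ℝ≥0} {x y : E}

theorem Convex.norm_image_sub_sub_fderiv_le_of_lipschitzOnWith (hs : Convex ℝ s)
    (hf : ∀ x ∈ s, HasFDerivWithinAt f (f' x) s x) (hf' : LipschitzOnWith K f' s)
    (hx : x ∈ s) (hy : y ∈ s) : ‖f y - f x - f' x (y - x)‖ ≤ K * ‖y - x‖ ^ 2 := by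
  have hseg : segment ℝ x y ⊆ s := hs.segment_subset hx hy
  have bound : ∀ w ∈ segment ℝ x y, ‖f' w - f' x‖ ≤ K * ‖y - x‖ := fun w hw =>
    (hf'.norm_sub_le (hseg hw) hx).trans <| by gcongr; exact norm_sub_le_of_mem_segment hw
  calc ‖f y - f x - f' x (y - x)‖ ≤ K * ‖y - x‖ * ‖y - x‖ :=
        (convex_segment x y).norm_image_sub_le_of_norm_hasFDerivWithin_le'
          (fun w hw => (hf w (hseg hw)).mono hseg) bound
          (left_mem_segment ℝ x y) (right_mem_segment ℝ x y)
    _ = K * ‖y - x‖ ^ 2 := by ring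

theorem Convex.norm_combo_sub_image_combo_le (hs : Convex ℝ s)
    (hf : ∀ x ∈ s, HasFDerivWithinAt f (f' x) s x) (hf' : LipschitzOnWith K f' s)
    (hx : x ∈ s) (hy : y ∈ s) {a b : ℝ} (ha : 0 ≤ a) (hb : 0 ≤ b) (hab : a + b = 1) :
    ‖a • f x + b • f y - f (a • x + b • y)‖ ≤ K * a * b * ‖x - y‖ ^ 2 := by
  set m := a • x + b • y
  have hm : m ∈ s := hs hx hy ha hb hab
  obtain rfl : a = 1 - b := eq_sub_of_add_eq hab
  have hxm : x - m = b • (x - y) := by module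
  have hym : y - m = (1 - b) • (y - x) := by module
  have hcenter : (1 - b) • (x - m) + b • (y - m) = 0 := by simp only [m]; module
  have hsplit : (1 - b) • f x + b • f y - f m
      = (1 - b) • (f x - f m - f' m (x - m)) + b • (f y - f m - f' m (y - m)) := by
    rw [← sub_zero (_ - f m), ← map_zero (f' m), ← hcenter, map_add, map_smul, map_smul]
    module
  rw [hsplit]
  calc ‖(1 - b) • (f x - f m - f' m (x - m)) + b • (f y - f m - f' m (y - m))‖
      ≤ (1 - b) * (K * ‖x - m‖ ^ 2) + b * (K * ‖y - m‖ ^ 2) := by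
        refine (norm_add_le _ _).trans (add_le_add ?_ ?_) <;>
          rw [norm_smul, Real.norm_of_nonneg ‹_›] <;> gcongr <;>
          exact hs.norm_image_sub_sub_fderiv_le_of_lipschitzOnWith hf hf' hm ‹_›
    _ = K * (1 - b) * b * ‖x - y‖ ^ 2 := by
        rw [hxm, hym, norm_smul, norm_smul, Real.norm_of_nonneg ha, Real.norm_of_nonneg hb,
          norm_sub_rev y x]
        ring

end Taylor

section NearIdentity

variable {E : Type*} [NormedAddCommGroup E] [NormedSpace ℝ E] {f : E → E}
  {f' : E → E →L[ℝ] E} {K : ℝ≥0} {ε : ℝ}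

theorem norm_image_sub_sub_le_of_lipschitzOnWith_fderiv
    (hf : ∀ x ∈ ball (0 : E) ε, HasFDerivAt f (f' x) x) (hf' : LipschitzOnWith K f' (ball 0 ε))
    (hf'0 : f' 0 = ContinuousLinearMap.id ℝ E) {x y : E} (hx : x ∈ ball 0 ε)
    (hy : y ∈ ball 0 ε) : ‖f y - f x - (y - x)‖ ≤ K * ε * ‖y - x‖ := by
  have h0 : (0 : E) ∈ ball 0 ε := mem_ball_self (pos_of_mem_ball hx)
  have bound : ∀ w ∈ ball (0 : E) ε, ‖f' w - ContinuousLinearMap.id ℝ E‖ ≤ K * ε := by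
    intro w hw
    rw [← hf'0]
    refine (hf'.norm_sub_le hw h0).trans ?_
    rw [sub_zero]
    exact mul_le_mul_of_nonneg_left (mem_ball_zero_iff.1 hw).le K.2
  simpa using (convex_ball (0 : E) ε).norm_image_sub_le_of_norm_hasFDerivWithin_le'
    (fun w hw => (hf w hw).hasFDerivWithinAt) bound hx hy

theorem injOn_ball_of_lipschitzOnWith_fderiv
    (hf : ∀ x ∈ ball (0 : E) ε, HasFDerivAt f (f' x) x) (hf' : LipschitzOnWith K f' (ball 0 ε))
    (hf'0 : f' 0 = ContinuousLinearMap.id ℝ E) (hKε : K * ε < 1) : InjOn f (ball 0 ε) := by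
  intro x hx y hy hxy
  have h := norm_image_sub_sub_le_of_lipschitzOnWith_fderiv hf hf' hf'0 hx hy
  rw [hxy, sub_self, zero_sub, norm_neg] at h
  have : ‖y - x‖ = 0 := by nlinarith [norm_nonneg (y - x)]
  exact (sub_eq_zero.1 (norm_eq_zero.1 this)).symm

theorem isOpen_image_ball_of_lipschitzOnWith_fderiv [CompleteSpace E]
    (hf : ∀ x ∈ ball (0 : E) ε, HasFDerivAt f (f' x) x) (hf' : LipschitzOnWith K f' (ball 0 ε))
    (hf'0 : f' 0 = ContinuousLinearMap.id ℝ E) (hKε : K * ε < 1) :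
    IsOpen (f '' ball 0 ε) := by
  have happrox : ApproximatesLinearOn f (ContinuousLinearMap.id ℝ E) (ball 0 ε)
      (Real.toNNReal (K * ε)) := fun y hy x hx => by
    simpa using (norm_image_sub_sub_le_of_lipschitzOnWith_fderiv hf hf' hf'0 hx hy).trans
      (by gcongr; exact Real.le_coe_toNNReal _)
  refine happrox.open_image ⟨id, 1, fun y => by simp, fun y => rfl⟩ isOpen_ball (Or.inr ?_)
  show Real.toNNReal (K * ε) < (1 : ℝ≥0)⁻¹
  rwa [inv_one, Real.toNNReal_lt_one]

end NearIdentity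

section InnerProductSpace

variable {E : Type*} [NormedAddCommGroup E] [InnerProductSpace ℝ E]

theorem norm_combo_sq_le (x y : E) {a b : ℝ} (ha : 0 ≤ a) (hb : 0 ≤ b) (hab : a + b = 1) :
    ‖a • x + b • y‖ ^ 2 ≤ a * ‖x‖ ^ 2 + b * ‖y‖ ^ 2 - a * b * ‖x - y‖ ^ 2 := by
  have hconv : StrongConvexOn univ 2 fun x : E => ‖x‖ ^ 2 :=
    strongConvexOn_iff_convex.2 (by simpa using convexOn_const (0 : ℝ) convex_univ)
  simpa using hconv.2 (mem_univ x) (mem_univ y) ha hb hab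

theorem norm_le_of_norm_sub_combo_le {x y z : E} {κ L a b : ℝ} (hx : ‖x‖ ≤ κ) (hy : ‖y‖ ≤ κ)
    (ha : 0 ≤ a) (hb : 0 ≤ b) (hab : a + b = 1) (hL : 0 ≤ L) (hLκ : 2 * L * κ ≤ 1)
    (hz : ‖z - (a • x + b • y)‖ ≤ L * (a * b * ‖x - y‖ ^ 2)) : ‖z‖ ≤ κ := by
  set m := a • x + b • y
  set r := ‖z - m‖
  set s := a * b * ‖x - y‖ ^ 2
  have hκ : 0 ≤ κ := (norm_nonneg x).trans hx
  have hs : 0 ≤ s := by positivity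
  have hsκ : s ≤ κ ^ 2 := by
    have hab4 : a * b ≤ 1 / 4 := by nlinarith [sq_nonneg (a - b)]
    have hd : ‖x - y‖ ≤ 2 * κ := (norm_sub_le x y).trans (by linarith)
    have hd2 : ‖x - y‖ ^ 2 ≤ (2 * κ) ^ 2 := by gcongr
    nlinarith [sq_nonneg ‖x - y‖]
  have hm : ‖m‖ ^ 2 ≤ κ ^ 2 - s := by
    have := norm_combo_sq_le x y ha hb hab
    have hx2 : ‖x‖ ^ 2 ≤ κ ^ 2 := by gcongr
    have hy2 : ‖y‖ ^ 2 ≤ κ ^ 2 := by gcongr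
    nlinarith
  have hr : 2 * κ * r ≤ s := by nlinarith [norm_nonneg (z - m)]
  have hrκ : r ≤ κ := by nlinarith [norm_nonneg (z - m)]
  have hmr : ‖m‖ ≤ κ - r := by
    refine (pow_le_pow_iff_left₀ (norm_nonneg m) (sub_nonneg.2 hrκ) two_ne_zero).1 ?_
    nlinarith [sq_nonneg r]
  linarith [norm_le_norm_add_norm_sub' z m]

end InnerProductSpace

section ConvexImage

variable {E : Type*} [NormedAddCommGroup E] [InnerProductSpace ℝ E] {f : E → E}
  {f' : E → E →L[ℝ] E} {K : ℝ≥0} {ε : ℝ}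

theorem norm_le_max_of_image_mem_segment
    (hf : ∀ x ∈ ball (0 : E) ε, HasFDerivAt f (f' x) x) (hf' : LipschitzOnWith K f' (ball 0 ε))
    (hf'0 : f' 0 = ContinuousLinearMap.id ℝ E) (hKε : 4 * K * ε ≤ 1) {x y z : E}
    (hx : x ∈ ball 0 ε) (hy : y ∈ ball 0 ε) (hz : z ∈ ball 0 ε)
    (hfz : f z ∈ segment ℝ (f x) (f y)) : ‖z‖ ≤ max ‖x‖ ‖y‖ := by
  obtain ⟨a, b, ha, hb, hab, hfz⟩ := hfz
  set m := a • x + b • y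
  have hm : m ∈ ball (0 : E) ε := convex_ball (0 : E) ε hx hy ha hb hab
  have hdefect := (convex_ball (0 : E) ε).norm_combo_sub_image_combo_le
    (fun w hw => (hf w hw).hasFDerivWithinAt) hf' hx hy ha hb hab
  have happrox := norm_image_sub_sub_le_of_lipschitzOnWith_fderiv hf hf' hf'0 hm hz
  have hsplit : z - m = (a • f x + b • f y - f m) - (f z - f m - (z - m)) := by
    rw [hfz]; abel
  have hzm : ‖z - m‖ ≤ 2 * K * (a * b * ‖x - y‖ ^ 2) := by
    have h := (congrArg norm hsplit).le.trans (norm_sub_le _ _)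
    have hKε' : (K : ℝ) * ε ≤ 1 / 4 := by linarith
    nlinarith [mul_le_mul_of_nonneg_right hKε' (norm_nonneg (z - m)),
      mul_nonneg (mul_nonneg ha hb) (sq_nonneg ‖x - y‖), K.2]
  have hκε : max ‖x‖ ‖y‖ < ε := max_lt (mem_ball_zero_iff.1 hx) (mem_ball_zero_iff.1 hy)
  exact norm_le_of_norm_sub_combo_le (le_max_left _ _) (le_max_right _ _) ha hb hab
    (by positivity) (by nlinarith [K.2]) hzm

theorem convex_image_ball_of_lipschitzOnWith_fderiv [ProperSpace E]
    (hf : ∀ x ∈ ball (0 : E) ε, HasFDerivAt f (f' x) x) (hf' : LipschitzOnWith K f' (ball 0 ε))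
    (hf'0 : f' 0 = ContinuousLinearMap.id ℝ E) (hKε : 4 * K * ε ≤ 1) :
    Convex ℝ (f '' ball 0 ε) := by
  refine convex_iff_segment_subset.2 ?_
  rintro _ ⟨x, hx, rfl⟩ _ ⟨y, hy, rfl⟩
  set κ := max ‖x‖ ‖y‖
  have hκε : κ < ε := max_lt (mem_ball_zero_iff.1 hx) (mem_ball_zero_iff.1 hy)
  set ρ := (κ + ε) / 2
  have hρε : ρ < ε := by simp only [ρ]; linarith
  have hκρ : κ < ρ := by simp only [ρ]; linarith
  have hρ : ball (0 : E) ρ ⊆ ball 0 ε := ball_subset_ball hρε.le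
  have hρ' : closedBall (0 : E) ρ ⊆ ball 0 ε := closedBall_subset_ball hρε
  have hopen : IsOpen (f '' ball 0 ρ) :=
    isOpen_image_ball_of_lipschitzOnWith_fderiv (fun w hw => hf w (hρ hw)) (hf'.mono hρ) hf'0
      (by nlinarith [K.2, (norm_nonneg x).trans (le_max_left _ _ : ‖x‖ ≤ κ)])
  have hclosed : IsClosed (f '' closedBall 0 ρ) :=
    ((isCompact_closedBall 0 ρ).image_of_continuousOn
      fun w hw => (hf w (hρ' hw)).continuousAt.continuousWithinAt).isClosed
  have hcover : segment ℝ (f x) (f y) ⊆ f '' ball 0 ρ ∪ (f '' closedBall 0 ρ)ᶜ := by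
    intro p hp
    by_cases hpC : p ∈ f '' closedBall 0 ρ
    · obtain ⟨z, hz, rfl⟩ := hpC
      have := norm_le_max_of_image_mem_segment hf hf' hf'0 hKε hx hy (hρ' hz) hp
      exact Or.inl ⟨z, mem_ball_zero_iff.2 (this.trans_lt hκρ), rfl⟩
    · exact Or.inr hpC
  have hdisj : Disjoint (f '' ball 0 ρ) (f '' closedBall 0 ρ)ᶜ :=
    disjoint_compl_right_iff_subset.2 (image_mono ball_subset_closedBall)
  have hx' : x ∈ ball (0 : E) ρ := mem_ball_zero_iff.2 ((le_max_left _ _).trans_lt hκρ)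
  exact ((convex_segment _ _).isPreconnected.subset_left_of_subset_union hopen
    hclosed.isOpen_compl hdisj hcover ⟨f x, left_mem_segment ℝ _ _, x, hx', rfl⟩).trans
    (image_mono hρ)

theorem eventually_image_ball_isOpen_convex_injOn [ProperSpace E] {t : Set E}
    (hf : ∀ᶠ x in 𝓝 0, HasFDerivAt f (f' x) x) (ht : t ∈ 𝓝 0)
    (hf' : LipschitzOnWith K f' t) (hf'0 : f' 0 = ContinuousLinearMap.id ℝ E) :
    ∀ᶠ ε in 𝓝[>] 0, IsOpen (f '' ball 0 ε) ∧ Convex ℝ (f '' ball 0 ε) ∧ InjOn f (ball 0 ε) := by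
  obtain ⟨δ, hδ, hδsub⟩ := Metric.mem_nhds_iff.1 (hf.and ht)
  have hsmall : ∀ᶠ ε in 𝓝 (0 : ℝ), 4 * (K : ℝ) * ε ≤ 1 :=
    (continuous_const.mul continuous_id : Continuous fun ε : ℝ => 4 * (K : ℝ) * ε).tendsto' 0 0
      (by simp) |>.eventually (eventually_le_nhds one_pos)
  filter_upwards [nhdsWithin_le_nhds (hsmall.and (eventually_le_nhds hδ))] with ε ⟨hKε, hεδ⟩
  have hfε : ∀ x ∈ ball (0 : E) ε, HasFDerivAt f (f' x) x :=
    fun x hx => (hδsub (ball_subset_ball hεδ hx)).1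
  have hf'ε : LipschitzOnWith K f' (ball 0 ε) :=
    hf'.mono fun x hx => (hδsub (ball_subset_ball hεδ hx)).2
  have hKε' : K * ε < 1 := by linarith
  exact ⟨isOpen_image_ball_of_lipschitzOnWith_fderiv hfε hf'ε hf'0 hKε',
    convex_image_ball_of_lipschitzOnWith_fderiv hfε hf'ε hf'0 hKε,
    injOn_ball_of_lipschitzOnWith_fderiv hfε hf'ε hf'0 hKε'⟩

end ConvexImage

theorem small_balls_to_convex_images_general {n : ℕ}
    (Ω : Set (EuclideanSpace ℂ (Fin n))) (hΩopen : IsOpen Ω)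
    (hΩ0 : (0 : EuclideanSpace ℂ (Fin n)) ∈ Ω)
    (F : EuclideanSpace ℂ (Fin n) → EuclideanSpace ℂ (Fin n))
    (hF : DifferentiableOn ℂ F Ω)
    (hDF : fderiv ℂ F 0 = ContinuousLinearMap.id ℂ (EuclideanSpace ℂ (Fin n))) :
    ∃ ε₀ > (0:ℝ), ∀ ε : ℝ, 0 < ε → ε ≤ ε₀ →
      ball (0 : EuclideanSpace ℂ (Fin n)) ε ⊆ Ω ∧
      IsOpen (F '' ball (0 : EuclideanSpace ℂ (Fin n)) ε) ∧
      Convex ℝ (F '' ball (0 : EuclideanSpace ℂ (Fin n)) ε) ∧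
      Set.InjOn F (ball (0 : EuclideanSpace ℂ (Fin n)) ε) := by
  -- the real inner product `re ⟪x, y⟫`, which induces the same norm
  let _ : InnerProductSpace ℝ (EuclideanSpace ℂ (Fin n)) := InnerProductSpace.complexToReal
  have hΩ : Ω ∈ 𝓝 0 := hΩopen.mem_nhds hΩ0
  have hdiff := hF.eventually_differentiableAt hΩ
  obtain ⟨K, t, ht, hLip⟩ := exists_lipschitzOnWith_fderiv_of_eventually_differentiableAt hdiff
  have hgood := eventually_image_ball_isOpen_convex_injOn
    (hdiff.mono fun x hx => hx.hasFDerivAt.restrictScalars ℝ) ht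
    ((ContinuousLinearMap.restrictScalarsIsometry ℂ _ _ ℝ ℝ).lipschitz.comp_lipschitzOnWith hLip)
    (by rw [hDF]; rfl)
  obtain ⟨δ, hδ, hδΩ⟩ := Metric.mem_nhds_iff.1 hΩ
  have hball : ∀ᶠ ε in 𝓝[>] 0, ball (0 : EuclideanSpace ℂ (Fin n)) ε ⊆ Ω := by
    filter_upwards [Ioo_mem_nhdsGT hδ] with ε hε using (ball_subset_ball hε.2.le).trans hδΩ
  obtain ⟨ε₀, hε₀, hsub⟩ := mem_nhdsGT_iff_exists_Ioc_subset.1 (hball.and hgood)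
  exact ⟨ε₀, hε₀, fun ε hε hεle => hsub ⟨hε, hεle⟩⟩

/-- A holomorphic map `F` near `0 ∈ ℂⁿ` with `F(0) = 0` and `DF(0) = Id` maps every
sufficiently small Euclidean ball `B(0,ε)` injectively onto an open convex set. -/
theorem small_balls_to_convex_images {n : ℕ}
    (Ω : Set (EuclideanSpace ℂ (Fin n))) (hΩopen : IsOpen Ω)
    (hΩ0 : (0 : EuclideanSpace ℂ (Fin n)) ∈ Ω)
    (F : EuclideanSpace ℂ (Fin n) → EuclideanSpace ℂ (Fin n))
    (hF : DifferentiableOn ℂ F Ω) (hF0 : F 0 = 0)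
    (hDF : fderiv ℂ F 0 = ContinuousLinearMap.id ℂ (EuclideanSpace ℂ (Fin n))) :
    ∃ ε₀ > (0:ℝ), ∀ ε : ℝ, 0 < ε → ε ≤ ε₀ →
      ball (0 : EuclideanSpace ℂ (Fin n)) ε ⊆ Ω ∧
      IsOpen (F '' ball (0 : EuclideanSpace ℂ (Fin n)) ε) ∧
      Convex ℝ (F '' ball (0 : EuclideanSpace ℂ (Fin n)) ε) ∧
      Set.InjOn F (ball (0 : EuclideanSpace ℂ (Fin n)) ε) :=
  small_balls_to_convex_images_general Ω hΩopen hΩ0 F hF hDF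
end
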